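/- (Weak duality for positively homogeneous optimization) Suppose Assumption 1 holds. If x ∈ ℝ^n is feasible for (P_PHO), i.e. Ax + BΨ(x) = b, Hx + KΨ(x) ≤ p and x ∈ dom Ψ, and (u,v) ∈ ℝ^k × ℝ^ℓ is feasible for (D_PHO), i.e. Ψ°(Aᵀu − Hᵀv − c) + Bᵀu − Kᵀv ≤ d and v ≥ 0, then cᵀx + dᵀΨ(x) ≥ bᵀu − pᵀv. -/

import Mathlib

open Matrix

/-- The polar of a positively homogeneous function: `ψ°(y) := sup { xᵀy : ψ(x) ≤ 1 }`. -/
noncomputable def polar {ι : Type*} [Fintype ι] (ψ : (ι → ℝ) → EReal) (y : ι → ℝ) : EReal :=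
  sSup {r : EReal | ∃ x : ι → ℝ, ψ x ≤ 1 ∧ r = ((x ⬝ᵥ y : ℝ) : EReal)}

/-- `ψ` is positively homogeneous: `ψ(λ x) = λ ψ(x)` for all `x` and all `λ > 0`. -/
def PosHom {ι : Type*} [Fintype ι] (ψ : (ι → ℝ) → EReal) : Prop :=
  ∀ (x : ι → ℝ) (lam : ℝ), 0 < lam → ψ (lam • x) = (lam : EReal) * ψ x

/-- The (real) vector `Ψ(x) = (ψ_1(x_{I_1}), …, ψ_m(x_{I_m}))`, for `x ∈ dom Ψ`. -/
noncomputable def PsiR {m : ℕ} {nn : Fin m → ℕ}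
    (ψ : (i : Fin m) → (Fin (nn i) → ℝ) → EReal)
    (x : ((i : Fin m) × Fin (nn i)) → ℝ) : Fin m → ℝ :=
  fun i => (ψ i (fun j => x ⟨i, j⟩)).toReal

/-- Weak duality for positively homogeneous optimization: under
Assumption 1 (each `ψ i` nonnegative), if `x` is feasible for (P_PHO), i.e.
`Ax + BΨ(x) = b`, `Hx + KΨ(x) ≤ p`, `x ∈ dom Ψ`, and `(u,v)` is feasible for (D_PHO),
i.e. `Ψ°(Aᵀu − Hᵀv − c) + Bᵀu − Kᵀv ≤ d` and `v ≥ 0`, then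
`cᵀx + dᵀΨ(x) ≥ bᵀu − pᵀv`. -/
theorem weak_duality_PHO {m k l : ℕ} (nn : Fin m → ℕ)
    (ψ : (i : Fin m) → (Fin (nn i) → ℝ) → EReal)
    (hph : ∀ i, PosHom (ψ i)) (hnn : ∀ i x, 0 ≤ ψ i x)
    (c : ((i : Fin m) × Fin (nn i)) → ℝ) (d : Fin m → ℝ) (b : Fin k → ℝ) (p : Fin l → ℝ)
    (A : Matrix (Fin k) ((i : Fin m) × Fin (nn i)) ℝ) (B : Matrix (Fin k) (Fin m) ℝ)
    (H : Matrix (Fin l) ((i : Fin m) × Fin (nn i)) ℝ) (K : Matrix (Fin l) (Fin m) ℝ)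
    (x : ((i : Fin m) × Fin (nn i)) → ℝ) (u : Fin k → ℝ) (v : Fin l → ℝ)
    (hxdom : ∀ i, ψ i (fun j => x ⟨i, j⟩) ≠ ⊤)
    (hxeq : A *ᵥ x + B *ᵥ PsiR ψ x = b)
    (hxineq : ∀ j, (H *ᵥ x) j + (K *ᵥ PsiR ψ x) j ≤ p j)
    (huv : ∀ i, polar (ψ i) (fun j => (Aᵀ *ᵥ u - Hᵀ *ᵥ v - c) ⟨i, j⟩) +
        (((Bᵀ *ᵥ u) i - (Kᵀ *ᵥ v) i : ℝ) : EReal) ≤ (d i : EReal))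
    (hv : ∀ j, 0 ≤ v j) :
    b ⬝ᵥ u - p ⬝ᵥ v ≤ c ⬝ᵥ x + d ⬝ᵥ PsiR ψ x := by
  classical
  set w : ((i : Fin m) × Fin (nn i)) → ℝ := Aᵀ *ᵥ u - Hᵀ *ᵥ v - c with hw
  set Px := PsiR ψ x with hPx
  have key : ∀ i : Fin m,
      (fun j => x ⟨i, j⟩) ⬝ᵥ (fun j => w ⟨i, j⟩) + Px i * ((Bᵀ *ᵥ u) i - (Kᵀ *ᵥ v) i)
        ≤ Px i * d i := by
    intro i
    set xi : Fin (nn i) → ℝ := fun j => x ⟨i, j⟩ with hxi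
    set wi : Fin (nn i) → ℝ := fun j => w ⟨i, j⟩ with hwi
    set s : ℝ := (Bᵀ *ᵥ u) i - (Kᵀ *ᵥ v) i with hs
    have hne_bot : ψ i xi ≠ ⊥ :=
      ne_of_gt (lt_of_lt_of_le (by exact_mod_cast EReal.bot_lt_coe 0) (hnn i xi))
    have ht : ψ i xi = ((Px i : ℝ) : EReal) := (EReal.coe_toReal (hxdom i) hne_bot).symm
    have ht0 : 0 ≤ Px i := by
      have h9 := hnn i xi
      rw [ht] at h9
      exact_mod_cast h9
    have hsup : ∀ y : Fin (nn i) → ℝ, ψ i y ≤ 1 → y ⬝ᵥ wi + s ≤ d i := by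
      intro y hy
      have h1 : ((y ⬝ᵥ wi : ℝ) : EReal) ≤ polar (ψ i) wi := le_sSup ⟨y, hy, rfl⟩
      have h2 := huv i
      have h3 : ((y ⬝ᵥ wi : ℝ) : EReal) + (s : EReal) ≤ (d i : EReal) :=
        le_trans (add_le_add_left h1 _) h2
      exact_mod_cast h3
    rcases eq_or_lt_of_le ht0 with h0 | hpos
    · have hx0 : ψ i xi = 0 := by rw [ht, ← h0]; rfl
      have hall : ∀ lam : ℝ, 0 < lam → lam * (xi ⬝ᵥ wi) + s ≤ d i := by
        intro lam hlam
        have h4 : ψ i (lam • xi) ≤ 1 := by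
          rw [hph i xi lam hlam, hx0, mul_zero]; exact zero_le_one
        have := hsup (lam • xi) h4
        simpa [smul_dotProduct, smul_eq_mul] using this
      have hle : xi ⬝ᵥ wi ≤ 0 := by
        by_contra hcon
        push_neg at hcon
        have h5 := hall ((|d i - s| + 1) / (xi ⬝ᵥ wi)) (by positivity)
        rw [div_mul_cancel₀ _ (ne_of_gt hcon)] at h5
        nlinarith [le_abs_self (d i - s)]
      rw [← h0]
      simpa using hle
    · have hxp : ψ i ((Px i)⁻¹ • xi) ≤ 1 := by
        rw [hph i xi (Px i)⁻¹ (by positivity), ht, ← EReal.coe_mul,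
          inv_mul_cancel₀ (ne_of_gt hpos)]
        exact le_refl _
      have h6 := hsup _ hxp
      rw [smul_dotProduct, smul_eq_mul] at h6
      have h7 := mul_le_mul_of_nonneg_left h6 (le_of_lt hpos)
      have h8 : Px i * ((Px i)⁻¹ * (xi ⬝ᵥ wi) + s) = xi ⬝ᵥ wi + Px i * s := by
        field_simp
      rw [h8] at h7
      exact h7
  have hsum : x ⬝ᵥ w + Px ⬝ᵥ (Bᵀ *ᵥ u - Kᵀ *ᵥ v) ≤ Px ⬝ᵥ d := by
    have h := Finset.sum_le_sum (fun i (_ : i ∈ Finset.univ) => key i)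
    have e1 : x ⬝ᵥ w = ∑ i : Fin m, (fun j => x ⟨i, j⟩) ⬝ᵥ (fun j => w ⟨i, j⟩) := by
      simp only [dotProduct]
      rw [← Finset.univ_sigma_univ, Finset.sum_sigma]
    have e2 : Px ⬝ᵥ (Bᵀ *ᵥ u - Kᵀ *ᵥ v) = ∑ i : Fin m, Px i * ((Bᵀ *ᵥ u) i - (Kᵀ *ᵥ v) i) := by
      simp [dotProduct]
    have e3 : Px ⬝ᵥ d = ∑ i : Fin m, Px i * d i := rfl
    rw [e1, e2, e3, ← Finset.sum_add_distrib]
    exact h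
  have ew : x ⬝ᵥ w = (A *ᵥ x) ⬝ᵥ u - (H *ᵥ x) ⬝ᵥ v - c ⬝ᵥ x := by
    rw [hw]
    rw [dotProduct_sub, dotProduct_sub, Matrix.dotProduct_mulVec, Matrix.vecMul_transpose,
      Matrix.dotProduct_mulVec, Matrix.vecMul_transpose, dotProduct_comm x c]
  have es : Px ⬝ᵥ (Bᵀ *ᵥ u - Kᵀ *ᵥ v) = (B *ᵥ Px) ⬝ᵥ u - (K *ᵥ Px) ⬝ᵥ v := by
    rw [dotProduct_sub, Matrix.dotProduct_mulVec, Matrix.vecMul_transpose,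
      Matrix.dotProduct_mulVec, Matrix.vecMul_transpose]

  have eb : (A *ᵥ x) ⬝ᵥ u + (B *ᵥ Px) ⬝ᵥ u = b ⬝ᵥ u := by
    rw [← add_dotProduct, hxeq]
  have ep : (H *ᵥ x) ⬝ᵥ v + (K *ᵥ Px) ⬝ᵥ v ≤ p ⬝ᵥ v := by
    rw [← add_dotProduct]
    exact Finset.sum_le_sum fun j _ =>
      mul_le_mul_of_nonneg_right (hxineq j) (hv j)
  have edd : Px ⬝ᵥ d = d ⬝ᵥ Px := dotProduct_comm _ _
  rw [ew, es, edd] at hsum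
  linarith
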